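/- arXiv:2007.04252 — 7 statements merged into one kernel-verified Lean document; each statement's English description precedes it below -/
import Mathlib

section
/- For a nonempty set A, define [K] = { {a} → (∅ → a) : a ∈ G(A) } ⊆ G(A). Then for all subsets M, N of G(A), ([K]·M)·N = M. That is, [K] realizes the combinator K in the graph model. -/
universe u

/-- The graph model `G(A)`: the least set containing the atoms `A` and closed under
forming pairs `α → a` where `α` is a finite (possibly empty) collection of elements
of `G(A)` (encoded as a list) and `a ∈ G(A)`. -/
inductive G (A : Type u) : Type u
  | atom : A → G A
  | arrow : List (G A) → G A → G A

/-- The application operation of the graph model: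
`M · N = {x : ∃ α, (α → x) ∈ M ∧ α ⊆ N}`. -/
def ap {A : Type u} (M N : Set (G A)) : Set (G A) :=
  {x | ∃ α : List (G A), G.arrow α x ∈ M ∧ ∀ b ∈ α, b ∈ N}

/-- The interpretation of the combinator `K`:
`[K] = { {a} → (∅ → a) : a ∈ G(A) }`. -/
def Kcomb (A : Type u) : Set (G A) :=
  {x | ∃ a : G A, x = G.arrow [a] (G.arrow [] a)}

/-- `[K]` realizes the combinator `K` in the graph model: `([K]·M)·N = M`. -/
theorem K_realizes {A : Type u} [Nonempty A] (M N : Set (G A)) :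
    ap (ap (Kcomb A) M) N = M := by
  ext x
  constructor
  · rintro ⟨α, ⟨β, ⟨a, h⟩, hβ⟩, -⟩
    cases h
    exact hβ _ (List.mem_singleton_self _)
  · intro hx
    exact ⟨[], ⟨[x], ⟨x, rfl⟩, by simpa⟩, by simp⟩
end

section
/- For a nonempty set A, define [S] ⊆ G(A) as the set of all elements of the form ({τ → ({r₁,…,rₙ} → s)} → ({σ₁ → r₁, …, σₙ → rₙ} → (σ → s))) where n ≥ 0, r₁,…,rₙ, s ∈ G(A), τ, σ₁,…,σₙ are finite subsets of G(A), and σ = τ ∪ σ₁ ∪ … ∪ σₙ. Then for all subsets M, N, P of G(A), (([S]·M)·N)·P = (M·P)·(N·P). That is, [S] realizes the combinator S in the graph model. -/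
universe u

/-- The interpretation of the combinator `S`: the set of all elements
`{τ → ({r₁,…,rₙ} → s)} → ({σ₁ → r₁, …, σₙ → rₙ} → (σ → s))` where `n ≥ 0`,
`r₁,…,rₙ, s ∈ G(A)`, `τ, σ₁,…,σₙ` are finite subsets of `G(A)` and
`σ = τ ∪ σ₁ ∪ … ∪ σₙ`.  Here the family `σ₁ → r₁, …, σₙ → rₙ` is encoded as a
list `ps` of pairs `(σᵢ, rᵢ)`, and `σ = τ ∪ σ₁ ∪ … ∪ σₙ` is expressed
extensionally (as equality of finite sets). -/
def Scomb (A : Type u) : Set (G A) :=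
  {x | ∃ (τ : List (G A)) (ps : List (List (G A) × G A)) (s : G A) (σ : List (G A)),
    (∀ y : G A, y ∈ σ ↔ y ∈ τ ∨ ∃ p ∈ ps, y ∈ p.1) ∧
    x = G.arrow [G.arrow τ (G.arrow (ps.map Prod.snd) s)]
          (G.arrow (ps.map fun p => G.arrow p.1 p.2) (G.arrow σ s))}

private lemma choose_ps {A : Type u} (N P : Set (G A)) :
    ∀ β : List (G A), (∀ r ∈ β, ∃ γ : List (G A), G.arrow γ r ∈ N ∧ ∀ b ∈ γ, b ∈ P) →
      ∃ ps : List (List (G A) × G A), ps.map Prod.snd = β ∧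
        ∀ p ∈ ps, G.arrow p.1 p.2 ∈ N ∧ ∀ b ∈ p.1, b ∈ P := by
  intro β
  induction β with
  | nil => exact fun _ => ⟨[], rfl, by simp⟩
  | cons r β ih =>
    intro h
    obtain ⟨γ, hγ⟩ := h r (by simp)
    obtain ⟨ps, hmap, hps⟩ := ih (fun r hr => h r (by simp [hr]))
    refine ⟨(γ, r) :: ps, by simp [hmap], ?_⟩
    rintro p hp
    rcases List.mem_cons.1 hp with rfl | hp
    · exact hγ
    · exact hps p hp

/-- `[S]` realizes the combinator `S` in the graph model:
`(([S]·M)·N)·P = (M·P)·(N·P)`. -/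
theorem S_realizes {A : Type u} [Nonempty A] (M N P : Set (G A)) :
    ap (ap (ap (Scomb A) M) N) P = ap (ap M P) (ap N P) := by
  ext s
  simp only [ap, Set.mem_setOf_eq]
  constructor
  · rintro ⟨σ', ⟨α2, ⟨α1, hS, hM⟩, hN⟩, hP⟩
    obtain ⟨τ, ps, s', σ, hσ, heq⟩ := hS
    injection heq with h1 h2
    injection h2 with h2a h2b
    injection h2b with h2c h2d
    subst h1 h2a h2c h2d
    refine ⟨ps.map Prod.snd, ⟨τ, hM _ (by simp), fun b hb => hP b ((hσ b).2 (Or.inl hb))⟩, ?_⟩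
    intro r hr
    obtain ⟨p, hp, rfl⟩ := List.mem_map.1 hr
    exact ⟨p.1, hN _ (List.mem_map.2 ⟨p, hp, rfl⟩),
      fun b hb => hP b ((hσ b).2 (Or.inr ⟨p, hp, hb⟩))⟩
  · rintro ⟨β, ⟨τ, hM, hτ⟩, hβ⟩
    obtain ⟨ps, hmap, hps⟩ := choose_ps N P β hβ
    refine ⟨τ ++ ps.flatMap (·.1),
      ⟨ps.map fun p => G.arrow p.1 p.2,
        ⟨[G.arrow τ (G.arrow (ps.map Prod.snd) s)],
          ⟨τ, ps, s, τ ++ ps.flatMap (·.1), fun y => by simp, rfl⟩,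
          by simpa [hmap] using hM⟩,
        ?_⟩, ?_⟩
    · intro b hb
      obtain ⟨p, hp, rfl⟩ := List.mem_map.1 hb
      exact (hps p hp).1
    · intro b hb
      rcases List.mem_append.1 hb with hb | hb
      · exact hτ b hb
      · obtain ⟨p, hp, hbp⟩ := List.mem_flatMap.1 hb
        exact (hps p hp).2 b hbp
end

section
/- For a nonempty set A, there exists a subset B of G(A) such that for all subsets M, N, P of G(A), ((B·M)·N)·P = M·(N·P). That is, the graph model contains an element realizing the composition combinator B. -/
/-!
Both sides of `((B·M)·N)·P = M·(N·P)` unfold to the same data: pairs `(ε₁, d₁), …, (εₖ, dₖ)` with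
`εᵢ → dᵢ ∈ N`, `ε₁ ∪ … ∪ εₖ ⊆ P` and `{d₁, …, dₖ} → x ∈ M`. For the left-hand side this forces
`B` to be the set of all `{{d₁, …, dₖ} → x} → ({ε₁ → d₁, …, εₖ → dₖ} → (ε₁ ∪ … ∪ εₖ → x))`;
for the right-hand side the `εᵢ` are chosen one by one along the list `[d₁, …, dₖ]`.
-/

universe u

theorem List.exists_map_snd_eq_of_forall_exists {α β : Type*} {R : β → α → Prop} :
    ∀ {l : List α}, (∀ a ∈ l, ∃ b, R b a) →
      ∃ ps : List (β × α), ps.map Prod.snd = l ∧ ∀ p ∈ ps, R p.1 p.2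
  | [], _ => ⟨[], rfl, by simp⟩
  | a :: l, h => by
    obtain ⟨b, hb⟩ := h a List.mem_cons_self
    obtain ⟨ps, hps, hR⟩ := exists_map_snd_eq_of_forall_exists fun a' ha' =>
      h a' (List.mem_cons_of_mem a ha')
    refine ⟨(b, a) :: ps, by simp [hps], ?_⟩
    rintro p (_ | ⟨_, hp⟩)
    exacts [hb, hR p hp]

namespace G

variable {A : Type u}

def compositionArrow (ps : List (List (G A) × G A)) (x : G A) : G A :=
  arrow [arrow (ps.map Prod.snd) x]
    (arrow (ps.map fun p => arrow p.1 p.2) (arrow (ps.map Prod.fst).flatten x))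

def combB : Set (G A) :=
  {z | ∃ ps x, z = compositionArrow ps x}

def Composes (M N P : Set (G A)) (x : G A) : Prop :=
  ∃ ps : List (List (G A) × G A), arrow (ps.map Prod.snd) x ∈ M ∧
    (∀ p ∈ ps, arrow p.1 p.2 ∈ N) ∧ ∀ b ∈ (ps.map Prod.fst).flatten, b ∈ P

theorem mem_ap_ap_ap_combB_iff {M N P : Set (G A)} {x : G A} :
    x ∈ ap (ap (ap combB M) N) P ↔ Composes M N P x := by
  constructor
  · rintro ⟨_, ⟨_, ⟨_, ⟨ps, x', hB⟩, hM⟩, hN⟩, hP⟩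
    simp only [compositionArrow, arrow.injEq] at hB
    obtain ⟨rfl, rfl, rfl, rfl⟩ := hB
    exact ⟨ps, hM _ List.mem_cons_self, fun p hp => hN _ (List.mem_map_of_mem hp), hP⟩
  · rintro ⟨ps, hM, hN, hP⟩
    refine ⟨_, ⟨_, ⟨_, ⟨ps, x, rfl⟩, ?_⟩, ?_⟩, hP⟩
    · simpa using hM
    · simp only [List.mem_map]
      rintro _ ⟨p, hp, rfl⟩
      exact hN p hp

theorem mem_ap_ap_iff {M N P : Set (G A)} {x : G A} :
    x ∈ ap M (ap N P) ↔ Composes M N P x := by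
  constructor
  · rintro ⟨δ, hM, hδ⟩
    obtain ⟨ps, rfl, hps⟩ := List.exists_map_snd_eq_of_forall_exists hδ
    refine ⟨ps, hM, fun p hp => (hps p hp).1, fun b hb => ?_⟩
    obtain ⟨_, hε, hb⟩ := List.mem_flatten.1 hb
    obtain ⟨p, hp, rfl⟩ := List.mem_map.1 hε
    exact (hps p hp).2 b hb
  · rintro ⟨ps, hM, hN, hP⟩
    refine ⟨_, hM, fun d hd => ?_⟩
    obtain ⟨p, hp, rfl⟩ := List.mem_map.1 hd
    exact ⟨p.1, hN p hp, fun b hb =>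
      hP b (List.mem_flatten.2 ⟨p.1, List.mem_map_of_mem hp, hb⟩)⟩

end G

theorem B_realized_general {A : Type u} :
    ∃ B : Set (G A), ∀ M N P : Set (G A), ap (ap (ap B M) N) P = ap M (ap N P) :=
  ⟨G.combB, fun _ _ _ => Set.ext fun _ => G.mem_ap_ap_ap_combB_iff.trans G.mem_ap_ap_iff.symm⟩

/-- The graph model contains an element realizing the composition combinator `B`:
there is `B ⊆ G(A)` with `((B·M)·N)·P = M·(N·P)` for all `M, N, P ⊆ G(A)`. -/
theorem B_realized {A : Type u} [Nonempty A] :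
    ∃ B : Set (G A), ∀ M N P : Set (G A), ap (ap (ap B M) N) P = ap M (ap N P) :=
  B_realized_general
end

section
/- For a nonempty set A and every Scott-continuous function f : 𝒫(G(A)) → 𝒫(G(A)), the set graph(f) = { α → a : α a finite subset of G(A), a ∈ f(α) } ⊆ G(A) represents f: for all subsets X of G(A), graph(f)·X = f(X). In particular, every Scott-continuous self-map of 𝒫(G(A)) is representable by an element of the graph model. -/
universe u

/-- A function `f : 𝒫(G(A)) → 𝒫(G(A))` is Scott-continuous if it is monotone
with respect to inclusion and `f(X) = ⋃ { f(α) : α finite, α ⊆ X }` for all `X`. -/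
def ScottContinuous' {A : Type u} (f : Set (G A) → Set (G A)) : Prop :=
  Monotone f ∧
    ∀ X : Set (G A), f X = ⋃₀ {Y | ∃ α : Set (G A), α.Finite ∧ α ⊆ X ∧ Y = f α}

/-- The graph of a function `f : 𝒫(G(A)) → 𝒫(G(A))`:
`graph(f) = { α → a : α a finite subset of G(A), a ∈ f(α) }`
(finite subsets encoded as lists). -/
def graph {A : Type u} (f : Set (G A) → Set (G A)) : Set (G A) :=
  {x | ∃ (α : List (G A)) (a : G A), a ∈ f {b | b ∈ α} ∧ x = G.arrow α a}

/-- Every Scott-continuous self-map of `𝒫(G(A))` is represented by its graph: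
`graph(f)·X = f(X)` for all `X ⊆ G(A)`. -/
theorem graph_represents {A : Type u} [Nonempty A] (f : Set (G A) → Set (G A))
    (hf : ScottContinuous' f) : ∀ X : Set (G A), ap (graph f) X = f X := by
  obtain ⟨hmono, hcont⟩ := hf
  intro X
  ext x
  constructor
  · rintro ⟨α, hx, hsub⟩
    obtain ⟨β, a, ha, heq⟩ := hx
    obtain ⟨rfl, rfl⟩ : β = α ∧ a = x := by
      cases heq; exact ⟨rfl, rfl⟩
    exact hmono (fun b hb => hsub b hb) ha
  · intro hx
    rw [hcont X] at hx
    obtain ⟨Y, ⟨α, hfin, hsub, rfl⟩, hx⟩ := hx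
    classical
    haveI := hfin.fintype
    refine ⟨hfin.toFinset.toList, ⟨hfin.toFinset.toList, x, ?_, rfl⟩, ?_⟩
    · have : {b | b ∈ hfin.toFinset.toList} = α := by
        ext b; simp
      rwa [this]
    · intro b hb
      apply hsub
      simpa using hb
end

section
/- Comprehension Theorem for the graph model: let A be a nonempty set and let t be a combinatory term built from variables x₁, …, xₙ and constants (each constant being a fixed subset of G(A)) by the binary application operation. Then there exists a subset M of G(A) such that for all subsets X₁, …, Xₙ of G(A), ((M·X₁)·X₂)···Xₙ equals the value of t obtained by interpreting each variable xᵢ as Xᵢ, each constant as its fixed subset of G(A), and term application as the application operation of the graph model. -/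
universe u

/-- Combinatory terms over variables `x₁, …, xₙ` and constants from `C`:
every variable is a term, every constant is a term, and terms are closed
under binary application. -/
inductive Term (n : ℕ) (C : Type*) : Type _
  | var : Fin n → Term n C
  | const : C → Term n C
  | app : Term n C → Term n C → Term n C

/-- The value of a combinatory term in the graph model, given an interpretation
`ι` of the constants as subsets of `G(A)` and an assignment `ρ` of subsets of
`G(A)` to the variables; application is interpreted by the application
operation of the graph model. -/
def Term.value {A : Type u} {n : ℕ} {C : Type*} (ι : C → Set (G A)) :
    Term n C → (Fin n → Set (G A)) → Set (G A)
  | .var i, ρ => ρ i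
  | .const c, _ => ι c
  | .app t s, ρ => ap (t.value ι ρ) (s.value ι ρ)

/-- Iterated application `((M·X₁)·X₂)···Xₙ`. -/
def iterAp {A : Type u} {n : ℕ} (M : Set (G A)) (X : Fin n → Set (G A)) : Set (G A) :=
  (List.ofFn X).foldl ap M
/-!
Every term denotes a finitary (Scott continuous) function of its arguments, because each
element of `M·N` needs only finitely many elements of `N`. A finitary function `f` of one
variable is represented by its graph `lam f = {α → x | x ∈ f α}`, as `lam f · X = f X`;
abstracting the variables one at a time, from the last to the first, yields `M`.
-/

theorem Fin.le_snoc_iff {α : Type*} [Preorder α] {n : ℕ} {σ : Fin (n + 1) → α}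
    {ρ : Fin n → α} {a : α} : σ ≤ Fin.snoc ρ a ↔ Fin.init σ ≤ ρ ∧ σ (Fin.last n) ≤ a := by
  simp [Pi.le_def, Fin.forall_iff_castSucc, Fin.init, and_comm]

theorem Fin.snoc_le_snoc_iff {α : Type*} [Preorder α] {n : ℕ} {ρ ρ' : Fin n → α} {a a' : α} :
    (Fin.snoc ρ a : Fin (n + 1) → α) ≤ Fin.snoc ρ' a' ↔ ρ ≤ ρ' ∧ a ≤ a' := by
  simp [Fin.le_snoc_iff]

variable {A : Type u}

theorem ap_mono {M M' N N' : Set (G A)} (hM : M ⊆ M') (hN : N ⊆ N') : ap M N ⊆ ap M' N' :=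
  fun _ ⟨α, hαM, hαN⟩ => ⟨α, hM hαM, fun b hb => hN (hαN b hb)⟩

def lam (f : Set (G A) → Set (G A)) : Set (G A) :=
  {y | ∃ α x, x ∈ f {b | b ∈ α} ∧ G.arrow α x = y}

theorem lam_mono {f g : Set (G A) → Set (G A)} (h : ∀ X, f X ⊆ g X) : lam f ⊆ lam g :=
  fun _ ⟨α, x, hx, hy⟩ => ⟨α, x, h _ hx, hy⟩

theorem ap_lam {f : Set (G A) → Set (G A)} (hf : Monotone f)
    (hfin : ∀ X, ∀ x ∈ f X, ∃ Y ⊆ X, Y.Finite ∧ x ∈ f Y) (X : Set (G A)) :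
    ap (lam f) X = f X := by
  ext x
  constructor
  · rintro ⟨α, ⟨α', x', hx, hα⟩, hαX⟩
    obtain ⟨rfl, rfl⟩ := G.arrow.inj hα
    exact hf (fun b hb => hαX b hb) hx
  · intro hx
    obtain ⟨Y, hYX, hY, hxY⟩ := hfin X x hx
    obtain ⟨s, rfl⟩ := hY.exists_finset_coe
    refine ⟨s.toList, ⟨s.toList, x, ?_, rfl⟩, fun b hb => hYX (by simpa using hb)⟩
    simpa using hxY

structure IsFinitary {ι α β : Type*} (F : (ι → Set α) → Set β) : Prop where
  monotone : Monotone F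
  exists_finite_le : ∀ ρ, ∀ x ∈ F ρ, ∃ σ ≤ ρ, (∀ i, (σ i).Finite) ∧ x ∈ F σ

namespace IsFinitary

variable {ι α β : Type*}

theorem apply (i : ι) : IsFinitary fun ρ : ι → Set α => ρ i where
  monotone _ _ h := h i
  exists_finite_le ρ x hx := by
    refine ⟨fun j => {y | j = i ∧ y = x}, ?_, fun j => ?_, ⟨rfl, rfl⟩⟩
    · rintro j y ⟨rfl, rfl⟩
      exact hx
    · exact (Set.finite_singleton x).subset fun y hy => hy.2

theorem const (c : Set β) : IsFinitary fun _ : ι → Set α => c where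
  monotone := monotone_const
  exists_finite_le _ _ hx := ⟨⊥, bot_le, fun _ => Set.finite_empty, hx⟩

theorem exists_finite_le_of_subset {F : (ι → Set α) → Set β} (hF : IsFinitary F)
    {ρ : ι → Set α} {S : Set β} (hS : S.Finite) (hSF : S ⊆ F ρ) :
    ∃ σ ≤ ρ, (∀ i, (σ i).Finite) ∧ S ⊆ F σ := by
  induction S, hS using Set.Finite.induction_on with
  | empty => exact ⟨⊥, bot_le, fun _ => Set.finite_empty, Set.empty_subset _⟩
  | @insert x S _ _ ih =>
    obtain ⟨σ, hσρ, hσ, hSσ⟩ := ih ((Set.subset_insert x S).trans hSF)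
    obtain ⟨τ, hτρ, hτ, hxτ⟩ := hF.exists_finite_le ρ x (hSF (Set.mem_insert x S))
    refine ⟨σ ⊔ τ, sup_le hσρ hτρ, fun i => (hσ i).union (hτ i), ?_⟩
    exact Set.insert_subset (hF.monotone le_sup_right hxτ)
      (hSσ.trans (hF.monotone le_sup_left))

theorem ap {F F' : (ι → Set α) → Set (G A)} (hF : IsFinitary F) (hF' : IsFinitary F') :
    IsFinitary fun ρ => ap (F ρ) (F' ρ) where
  monotone _ _ h := ap_mono (hF.monotone h) (hF'.monotone h)
  exists_finite_le ρ x := by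
    rintro ⟨α, hαF, hαF'⟩
    obtain ⟨σ, hσρ, hσ, hxσ⟩ := hF.exists_finite_le ρ _ hαF
    obtain ⟨τ, hτρ, hτ, hατ⟩ := hF'.exists_finite_le_of_subset
      (S := {b | b ∈ α}) α.finite_toSet hαF'
    exact ⟨σ ⊔ τ, sup_le hσρ hτρ, fun i => (hσ i).union (hτ i),
      α, hF.monotone le_sup_left hxσ, fun b hb => hF'.monotone le_sup_right (hατ hb)⟩

variable {n : ℕ} {F : (Fin (n + 1) → Set (G A)) → Set (G A)}

theorem ap_lam_snoc (hF : IsFinitary F) (ρ : Fin n → Set (G A)) (X : Set (G A)) :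
    _root_.ap (lam fun Y => F (Fin.snoc ρ Y)) X = F (Fin.snoc ρ X) := by
  refine ap_lam (fun Y Y' h => hF.monotone (Fin.snoc_le_snoc_iff.2 ⟨le_rfl, h⟩)) ?_ X
  intro X x hx
  obtain ⟨σ, hσρ, hσ, hxσ⟩ := hF.exists_finite_le _ x hx
  obtain ⟨hinit, hlast⟩ := Fin.le_snoc_iff.1 hσρ
  exact ⟨σ (Fin.last n), hlast, hσ _,
    hF.monotone (Fin.le_snoc_iff.2 ⟨hinit, le_rfl⟩) hxσ⟩

theorem lam_snoc (hF : IsFinitary F) :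
    IsFinitary fun ρ : Fin n → Set (G A) => lam fun Y => F (Fin.snoc ρ Y) where
  monotone _ _ h := lam_mono fun _ => hF.monotone (Fin.snoc_le_snoc_iff.2 ⟨h, le_rfl⟩)
  exists_finite_le ρ y := by
    rintro ⟨α, x, hx, rfl⟩
    obtain ⟨σ, hσρ, hσ, hxσ⟩ := hF.exists_finite_le _ x hx
    obtain ⟨hinit, hlast⟩ := Fin.le_snoc_iff.1 hσρ
    exact ⟨Fin.init σ, hinit, fun i => hσ _, α, x,
      hF.monotone (Fin.le_snoc_iff.2 ⟨le_rfl, hlast⟩) hxσ, rfl⟩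

end IsFinitary

theorem Term.isFinitary_value {n : ℕ} {C : Type*} (ι : C → Set (G A)) (t : Term n C) :
    IsFinitary (t.value ι) := by
  induction t with
  | var i => exact IsFinitary.apply i
  | const c => exact IsFinitary.const (ι c)
  | app t s iht ihs => exact iht.ap ihs

theorem iterAp_snoc {n : ℕ} (M : Set (G A)) (X : Fin n → Set (G A)) (Y : Set (G A)) :
    iterAp M (Fin.snoc X Y) = ap (iterAp M X) Y := by
  rw [iterAp, iterAp, List.ofFn_succ', List.concat_eq_append, List.foldl_append]
  simp only [Fin.snoc_castSucc, Fin.snoc_last, List.foldl_cons, List.foldl_nil]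

theorem exists_iterAp_eq {n : ℕ} {F : (Fin n → Set (G A)) → Set (G A)} (hF : IsFinitary F) :
    ∃ M, ∀ X, iterAp M X = F X := by
  induction n with
  | zero => exact ⟨F Fin.elim0, fun X => by simp [iterAp, Subsingleton.elim X Fin.elim0]⟩
  | succ n ih =>
    obtain ⟨M, hM⟩ := ih hF.lam_snoc
    refine ⟨M, fun X => ?_⟩
    induction X using Fin.snocCases with
    | snoc X Y => rw [iterAp_snoc, hM, hF.ap_lam_snoc]

theorem comprehension_general {A : Type u} {n : ℕ} {C : Type*}
    (ι : C → Set (G A)) (t : Term n C) :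
    ∃ M : Set (G A), ∀ X : Fin n → Set (G A), iterAp M X = t.value ι X :=
  exists_iterAp_eq (t.isFinitary_value ι)

/-- Comprehension theorem for the graph model: for every combinatory term `t`
built from `n` variables and constants (interpreted as fixed subsets of `G(A)`)
there is `M ⊆ G(A)` with `((M·X₁)·X₂)···Xₙ = t(X₁,…,Xₙ)` for all
`X₁, …, Xₙ ⊆ G(A)`. -/
theorem comprehension {A : Type u} [Nonempty A] {n : ℕ} {C : Type*}
    (ι : C → Set (G A)) (t : Term n C) :
    ∃ M : Set (G A), ∀ X : Fin n → Set (G A), iterAp M X = t.value ι X :=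
  comprehension_general ι t
end

section
/- For a nonempty set A and every function f : 𝒫(G(A))ⁿ → 𝒫(G(A)) (n ≥ 1) that is Scott-continuous in each argument separately, there exists a subset M of G(A) such that for all subsets X₁, …, Xₙ of G(A), ((M·X₁)·X₂)···Xₙ = f(X₁, …, Xₙ). That is, every function of several set arguments that is Scott-continuous in each variable is representable by an element of the graph model via iterated application. -/
universe u

/-- Nested arrows `α₁ → (α₂ → ⋯ (αₙ → y))`. -/
def nest {A : Type u} : {n : ℕ} → (Fin n → List (G A)) → G A → G A
  | 0, _, y => y
  | _ + 1, αs, y => G.arrow (αs 0) (nest (Fin.tail αs) y)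

/-- The code (graph) of an `n`-ary set function. -/
def code {A : Type u} (n : ℕ) (f : (Fin n → Set (G A)) → Set (G A)) : Set (G A) :=
  {x | ∃ (αs : Fin n → List (G A)) (y : G A),
    x = nest αs y ∧ y ∈ f (fun i => {a | a ∈ αs i})}

lemma cons_eq_fun {A : Type u} {n : ℕ} (αs : Fin (n + 1) → List (G A)) :
    (Fin.cons (α := fun _ => Set (G A)) {a | a ∈ αs 0}
      (fun i => {a | a ∈ αs i.succ})) = fun i => {a | a ∈ αs i} := by
  funext i
  refine Fin.cases ?_ ?_ i <;> simp

lemma ap_code {A : Type u} {n : ℕ}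
    (f : (Fin (n + 1) → Set (G A)) → Set (G A))
    (hf : ∀ (i : Fin (n + 1)) (X : Fin (n + 1) → Set (G A)),
      ScottContinuous' fun Y => f (Function.update X i Y))
    (X0 : Set (G A)) :
    ap (code (n + 1) f) X0 = code n (fun Y => f (Fin.cons X0 Y)) := by
  ext x
  constructor
  · rintro ⟨α, ⟨αs, y, hx, hy⟩, hsub⟩
    cases hx with
    | refl =>
      refine ⟨Fin.tail αs, y, rfl, ?_⟩
      have hmono := (hf 0 (Fin.cons X0 (fun i => {a | a ∈ (Fin.tail αs) i}))).1
      have h1 : ({a | a ∈ αs 0} : Set (G A)) ≤ X0 := fun a ha => hsub a ha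
      have := hmono h1
      simp only [Fin.update_cons_zero] at this
      apply this
      have h2 : (Fin.cons (α := fun _ => Set (G A)) {a | a ∈ αs 0}
          (fun i => {a | a ∈ (Fin.tail αs) i})) = fun i => {a | a ∈ αs i} :=
        cons_eq_fun αs
      rw [h2]
      exact hy
  · rintro ⟨βs, y, hx, hy⟩
    -- use continuity in the first coordinate
    have hcont := (hf 0 (Fin.cons X0 (fun i => {a | a ∈ βs i}))).2 X0
    simp only [Fin.update_cons_zero] at hcont
    change y ∈ f (Fin.cons X0 fun i => {a | a ∈ βs i}) at hy
    rw [hcont] at hy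
    obtain ⟨S, ⟨α, hαfin, hαsub, rfl⟩, hyS⟩ := hy
    -- turn the finite set α into a list
    refine ⟨hαfin.toFinset.toList, ⟨Fin.cons hαfin.toFinset.toList βs, y, ?_, ?_⟩, ?_⟩
    · simp [nest, hx, Fin.tail_cons]
    · have h2 : (fun i => {a | a ∈ (Fin.cons (α := fun _ => List (G A))
          hαfin.toFinset.toList βs) i}) =
          Fin.cons (α := fun _ => Set (G A)) α (fun i => {a | a ∈ βs i}) := by
        rw [← cons_eq_fun (Fin.cons hαfin.toFinset.toList βs)]
        congr 1
        · ext a; simp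
      rw [h2]
      exact hyS
    · intro b hb
      apply hαsub
      simpa using hb

lemma iterAp_code {A : Type u} : ∀ (n : ℕ)
    (f : (Fin n → Set (G A)) → Set (G A)),
    (∀ (i : Fin n) (X : Fin n → Set (G A)),
      ScottContinuous' fun Y => f (Function.update X i Y)) →
    ∀ X : Fin n → Set (G A), iterAp (code n f) X = f X := by
  intro n
  induction n with
  | zero =>
    intro f _ X
    have hX : iterAp (code 0 f) X = code 0 f := by
      simp [iterAp, List.ofFn_zero]
    rw [hX]
    ext x
    constructor
    · rintro ⟨αs, y, hx, hy⟩
      cases hx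
      have : (fun i => {a | a ∈ αs i}) = X := funext fun i => i.elim0
      rw [this] at hy
      exact hy
    · intro hx
      refine ⟨fun i => i.elim0, x, rfl, ?_⟩
      have : (fun i : Fin 0 => {a | a ∈ (fun j : Fin 0 => j.elim0 (α := List (G A))) i}) = X :=
        funext fun i => i.elim0
      rw [this]
      exact hx
  | succ n ih =>
    intro f hf X
    have h1 : iterAp (code (n + 1) f) X
        = iterAp (ap (code (n + 1) f) (X 0)) (Fin.tail X) := by
      rw [iterAp, iterAp, List.ofFn_succ]; rfl
    rw [h1, ap_code f hf (X 0)]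
    have hg : ∀ (i : Fin n) (Y : Fin n → Set (G A)),
        ScottContinuous' fun Z => f (Fin.cons (X 0) (Function.update Y i Z)) := by
      intro i Y
      have := hf i.succ (Fin.cons (X 0) Y)
      simpa [Fin.cons_update] using this
    rw [ih (fun Y => f (Fin.cons (X 0) Y)) hg (Fin.tail X)]
    exact congrArg f (Fin.cons_self_tail X)

/-- Every function `f : 𝒫(G(A))ⁿ → 𝒫(G(A))` (`n ≥ 1`) that is Scott-continuous
in each argument separately is representable by an element of the graph model
via iterated application: there is `M ⊆ G(A)` such that
`((M·X₁)·X₂)···Xₙ = f(X₁,…,Xₙ)` for all `X₁,…,Xₙ ⊆ G(A)`. -/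
theorem representable_of_scottContinuous_each {A : Type u} [Nonempty A] {n : ℕ}
    (hn : 1 ≤ n) (f : (Fin n → Set (G A)) → Set (G A))
    (hf : ∀ (i : Fin n) (X : Fin n → Set (G A)),
      ScottContinuous' fun Y => f (Function.update X i Y)) :
    ∃ M : Set (G A), ∀ X : Fin n → Set (G A), iterAp M X = f X :=
  ⟨code n f, iterAp_code n f hf⟩
end

section
/- For a nonempty set A and every subset M of G(A), there exists a subset F of G(A) with M·F = F; that is, every element of the graph model, acting by application, has a fixpoint. -/
universe u

/-- Every element of the graph model, acting by application, has a fixpoint: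
for every `M ⊆ G(A)` there is `F ⊆ G(A)` with `M·F = F`. -/
theorem exists_fixpoint {A : Type u} [Nonempty A] (M : Set (G A)) :
    ∃ F : Set (G A), ap M F = F := by
  have hmono : Monotone (fun N => ap M N) := by
    intro N₁ N₂ h x hx
    obtain ⟨α, hα, hb⟩ := hx
    exact ⟨α, hα, fun b hbα => h (hb b hbα)⟩
  exact ⟨OrderHom.lfp ⟨fun N => ap M N, hmono⟩,
    OrderHom.map_lfp ⟨fun N => ap M N, hmono⟩⟩
end
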